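/- arXiv:1701.07938 — 3 statements merged into one kernel-verified Lean document; each statement's English description precedes it below -/
import Mathlib

section
/- Let ℓ ≥ 3. There exists a proper algebraic subset Σ ⊂ (ℝ²)^ℓ such that for every p = (p₁,…,p_ℓ) ∈ (ℝ²)^ℓ \ Σ and every singular point q ∈ ℝ² of the mapping F_p, one has q ≠ p_i for all 1 ≤ i ≤ ℓ; equivalently, all the values c_i = F_i(q) are strictly positive, so each level set {x : F_i(x) = c_i} is an ellipse (for i = 1) or a circle (for 2 ≤ i ≤ ℓ) rather than a single point. -/
/-- The (rescaled) Jacobian matrix of the generalized distance-squared mapping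
`F_p(x) = (a(x₁-p₁₁)² + b(x₂-p₁₂)², |x-p₂|², …, |x-p_ℓ|²)` at the point `q`. -/
noncomputable def Jmat (ℓ : ℕ) (a b : ℝ) (p : Fin ℓ → ℝ × ℝ) (q : ℝ × ℝ) :
    Matrix (Fin ℓ) (Fin 2) ℝ :=
  fun i => if i.val = 0 then ![a * (q.1 - (p i).1), b * (q.2 - (p i).2)]
    else ![q.1 - (p i).1, q.2 - (p i).2]

/-- `q` is a singular point of `F_p`: the Jacobian matrix has rank < 2. -/
def IsSingular (ℓ : ℕ) (a b : ℝ) (p : Fin ℓ → ℝ × ℝ) (q : ℝ × ℝ) : Prop :=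
  (Jmat ℓ a b p q).rank < 2

/-- The `2ℓ` real coordinates of a central point `p ∈ (ℝ²)^ℓ`. -/
def coords (ℓ : ℕ) (p : Fin ℓ → ℝ × ℝ) : Fin ℓ × Fin 2 → ℝ :=
  fun ij => if ij.2.val = 0 then (p ij.1).1 else (p ij.1).2

/-!
At `q = p i` the `i`-th row of the Jacobian of `F_p` vanishes, so `p i` is a regular point as soon
as the `2 × 2` minor formed by two other fixed rows is nonzero there. Evaluated at `q = p i`, that
minor is a polynomial in the coordinates of `p`; `Σ` is the zero set of the product of these `ℓ`
polynomials, and it is proper because one explicit configuration makes every factor nonzero.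
-/

open MvPolynomial

theorem Matrix.card_le_rank_of_det_submatrix_ne_zero {m n K : Type*} [Field K] [Fintype m]
    [Fintype n] [DecidableEq n] (A : Matrix m n K) (r : n → m)
    (h : (A.submatrix r id).det ≠ 0) : Fintype.card n ≤ A.rank := by
  have hunit : IsUnit (A.submatrix r id) := (Matrix.isUnit_iff_isUnit_det _).mpr h.isUnit
  calc Fintype.card n = (A.submatrix r id).rank := (Matrix.rank_of_isUnit _ hunit).symm
    _ ≤ A.rank := Matrix.rank_submatrix_le A r id

noncomputable def centerJmatPoly (ℓ : ℕ) (a b : ℝ) (i : Fin ℓ) :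
    Matrix (Fin ℓ) (Fin 2) (MvPolynomial (Fin ℓ × Fin 2) ℝ) :=
  fun r => if r.val = 0 then ![C a * (X (i, 0) - X (r, 0)), C b * (X (i, 1) - X (r, 1))]
    else ![X (i, 0) - X (r, 0), X (i, 1) - X (r, 1)]

theorem centerJmatPoly_map_eval (ℓ : ℕ) (a b : ℝ) (p : Fin ℓ → ℝ × ℝ) (i : Fin ℓ) :
    (centerJmatPoly ℓ a b i).map (eval (coords ℓ p)) = Jmat ℓ a b p (p i) := by
  ext r j
  fin_cases j <;> by_cases hr : r.val = 0 <;> simp [centerJmatPoly, Jmat, coords, hr]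

section Minors

variable {ℓ : ℕ} (hℓ : 3 ≤ ℓ)

def otherRows (i : Fin ℓ) : Fin 2 → Fin ℓ :=
  if i.val = 0 then ![⟨1, by omega⟩, ⟨2, by omega⟩]
  else if i.val = 1 then ![⟨0, by omega⟩, ⟨2, by omega⟩]
  else ![⟨0, by omega⟩, ⟨1, by omega⟩]

noncomputable def centerMinor (a b : ℝ) (i : Fin ℓ) : MvPolynomial (Fin ℓ × Fin 2) ℝ :=
  ((centerJmatPoly ℓ a b i).submatrix (otherRows hℓ i) id).det

theorem eval_centerMinor (a b : ℝ) (p : Fin ℓ → ℝ × ℝ) (i : Fin ℓ) :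
    eval (coords ℓ p) (centerMinor hℓ a b i) =
      ((Jmat ℓ a b p (p i)).submatrix (otherRows hℓ i) id).det := by
  rw [centerMinor, RingHom.map_det, RingHom.mapMatrix_apply, ← Matrix.submatrix_map,
    centerJmatPoly_map_eval]

theorem not_isSingular_center {a b : ℝ} {p : Fin ℓ → ℝ × ℝ} {i : Fin ℓ}
    (h : eval (coords ℓ p) (centerMinor hℓ a b i) ≠ 0) : ¬ IsSingular ℓ a b p (p i) := by
  rw [eval_centerMinor] at h
  simpa [IsSingular] using (Matrix.card_le_rank_of_det_submatrix_ne_zero _ _ h).not_gt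

noncomputable def sampleCenters (ℓ : ℕ) : Fin ℓ → ℝ × ℝ := fun m =>
  if m.val = 0 then (0, 0) else if m.val = 1 then (1, 0) else (0, (m.val : ℝ))

theorem eval_centerMinor_sampleCenters_ne_zero {a b : ℝ} (ha : a ≠ 0) (hb : b ≠ 0) (i : Fin ℓ) :
    eval (coords ℓ (sampleCenters ℓ)) (centerMinor hℓ a b i) ≠ 0 := by
  rw [eval_centerMinor, Matrix.det_fin_two]
  rcases (by omega : i.val = 0 ∨ i.val = 1 ∨ 2 ≤ i.val) with hi | hi | hi
  · simp [otherRows, Jmat, sampleCenters, hi]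
  · simp [otherRows, Jmat, sampleCenters, hi, ha]
  · have hi0 : i.val ≠ 0 := by omega
    have hi1 : i.val ≠ 1 := by omega
    have hpos : (0 : ℝ) < i.val := by exact_mod_cast (by omega : 0 < i.val)
    simp [otherRows, Jmat, sampleCenters, hi0, hi1, hb, hpos.ne']

end Minors

/-- There is a proper algebraic subset Σ of (ℝ²)^ℓ such that for p outside Σ,
every singular point q of F_p differs from all the centers p_i. -/
theorem stmt3 (ℓ : ℕ) (hℓ : 3 ≤ ℓ) (a b : ℝ) (ha : 0 < a) (hab : a < b) :
    ∃ Sig : Set (Fin ℓ → ℝ × ℝ),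
      (∃ S : Finset (MvPolynomial (Fin ℓ × Fin 2) ℝ),
        Sig = {p | ∀ f ∈ S, MvPolynomial.eval (coords ℓ p) f = 0}) ∧
      Sig ≠ Set.univ ∧
      ∀ p ∉ Sig, ∀ q : ℝ × ℝ, IsSingular ℓ a b p q → ∀ i : Fin ℓ, q ≠ p i := by
  set G := ∏ i, centerMinor hℓ a b i
  have eval_G_ne_zero {p : Fin ℓ → ℝ × ℝ} :
      eval (coords ℓ p) G ≠ 0 ↔ ∀ i, eval (coords ℓ p) (centerMinor hℓ a b i) ≠ 0 := by
    simp [G, Finset.prod_ne_zero_iff]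
  refine ⟨{p | eval (coords ℓ p) G = 0}, ⟨{G}, by simp⟩, ?_, ?_⟩
  · intro huniv
    have hsample : sampleCenters ℓ ∉ {p | eval (coords ℓ p) G = 0} :=
      eval_G_ne_zero.mpr (eval_centerMinor_sampleCenters_ne_zero hℓ ha.ne' (ha.trans hab).ne')
    exact hsample (huniv ▸ Set.mem_univ _)
  · rintro p hp q hsing i rfl
    exact not_isSingular_center hℓ (eval_G_ne_zero.mp hp i) hsing
end

section
/- Let ℓ > 3 and let p = (p₁,…,p_ℓ) ∈ (ℝ²)^ℓ. If the singular set of F_p : ℝ² → ℝ^ℓ is nonempty, then the 2ℓ coordinates of p satisfy a nontrivial polynomial relation; more precisely, the set of p ∈ (ℝ²)^ℓ for which F_p has a singular point is contained in a proper algebraic subset of (ℝ²)^ℓ (equivalently, for almost every p with respect to Lebesgue measure, F_p is an immersion). -/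
/-!
Let `q` be a singular point of `F_p` and `v ≠ 0` a kernel vector of the Jacobian at `q`. Every
round component `F_i`, `i ≥ 1`, contributes the row `q - p_i`, so `p_1, p_2, p_3` all lie on the line
through `q` orthogonal to `v`. Hence singular central points lie in the zero set of the
collinearity determinant of `p_1, p_2, p_3`, a polynomial in the coordinates of `p` that does not
vanish identically.
-/

open Matrix

theorem Matrix.exists_ne_zero_mulVec_eq_zero_of_rank_lt {m n K : Type*} [Fintype m] [Fintype n]
    [Field K] {A : Matrix m n K} (h : A.rank < Fintype.card n) :
    ∃ v ≠ 0, A *ᵥ v = 0 := by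
  by_contra! hker
  have hinj : Function.Injective A.mulVecLin := by
    rw [← LinearMap.ker_eq_bot, Matrix.ker_mulVecLin_eq_bot_iff]
    exact fun v hv => not_not.mp fun hv0 => hker v hv0 hv
  rw [Matrix.rank, LinearMap.finrank_range_of_inj hinj, Module.finrank_fintype_fun_eq_card] at h
  exact lt_irrefl _ h

theorem sub_mul_eq_zero_of_orthogonal {R : Type*} [CommRing R] [NoZeroDivisors R]
    {c d x₁ y₁ x₂ y₂ : R} (hv : c ≠ 0 ∨ d ≠ 0)
    (h₁ : x₁ * c + y₁ * d = 0) (h₂ : x₂ * c + y₂ * d = 0) :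
    x₁ * y₂ - y₁ * x₂ = 0 := by
  rcases hv with hc | hd
  · refine (mul_eq_zero.mp ?_).resolve_right hc
    linear_combination y₂ * h₁ - y₁ * h₂
  · refine (mul_eq_zero.mp ?_).resolve_right hd
    linear_combination x₁ * h₂ - x₂ * h₁

/-- Twice the signed area of the triangle `u v w`; it vanishes iff `u, v, w` are collinear. -/
def triangleDet (u v w : ℝ × ℝ) : ℝ :=
  (v.1 - u.1) * (w.2 - u.2) - (w.1 - u.1) * (v.2 - u.2)

theorem triangleDet_eq_zero_of_orthogonal {u v w q : ℝ × ℝ} {c d : ℝ} (hcd : c ≠ 0 ∨ d ≠ 0)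
    (hu : (q.1 - u.1) * c + (q.2 - u.2) * d = 0)
    (hv : (q.1 - v.1) * c + (q.2 - v.2) * d = 0)
    (hw : (q.1 - w.1) * c + (q.2 - w.2) * d = 0) :
    triangleDet u v w = 0 := by
  have huv := sub_mul_eq_zero_of_orthogonal hcd hu hv
  have huw := sub_mul_eq_zero_of_orthogonal hcd hu hw
  have hvw := sub_mul_eq_zero_of_orthogonal hcd hv hw
  unfold triangleDet
  linear_combination huv - huw + hvw

theorem Jmat_mulVec_of_ne_zero {ℓ : ℕ} (a b : ℝ) (p : Fin ℓ → ℝ × ℝ) (q : ℝ × ℝ)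
    (v : Fin 2 → ℝ) {i : Fin ℓ} (hi : i.val ≠ 0) :
    (Jmat ℓ a b p q *ᵥ v) i = (q.1 - (p i).1) * v 0 + (q.2 - (p i).2) * v 1 := by
  simp [Matrix.mulVec, dotProduct, Fin.sum_univ_two, Jmat, hi]

theorem IsSingular.triangleDet_eq_zero {ℓ : ℕ} {a b : ℝ} {p : Fin ℓ → ℝ × ℝ} {q : ℝ × ℝ}
    (hq : IsSingular ℓ a b p q) {i j k : Fin ℓ} (hi : i.val ≠ 0) (hj : j.val ≠ 0)
    (hk : k.val ≠ 0) :
    triangleDet (p i) (p j) (p k) = 0 := by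
  obtain ⟨v, hv, hker⟩ := Matrix.exists_ne_zero_mulVec_eq_zero_of_rank_lt
    (hq.trans_eq (Fintype.card_fin 2).symm)
  have hv' : v 0 ≠ 0 ∨ v 1 ≠ 0 := by
    by_contra! hv0
    exact hv (funext fun r => by fin_cases r <;> simp [hv0.1, hv0.2])
  have hrow {r : Fin ℓ} (hr : r.val ≠ 0) :
      (q.1 - (p r).1) * v 0 + (q.2 - (p r).2) * v 1 = 0 := by
    rw [← Jmat_mulVec_of_ne_zero a b p q v hr, hker, Pi.zero_apply]
  exact triangleDet_eq_zero_of_orthogonal hv' (hrow hi) (hrow hj) (hrow hk)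

open MvPolynomial in
noncomputable def triangleDetPoly {ℓ : ℕ} (i j k : Fin ℓ) : MvPolynomial (Fin ℓ × Fin 2) ℝ :=
  (X (j, 0) - X (i, 0)) * (X (k, 1) - X (i, 1)) - (X (k, 0) - X (i, 0)) * (X (j, 1) - X (i, 1))

theorem eval_triangleDetPoly {ℓ : ℕ} (i j k : Fin ℓ) (p : Fin ℓ → ℝ × ℝ) :
    MvPolynomial.eval (coords ℓ p) (triangleDetPoly i j k) = triangleDet (p i) (p j) (p k) := by
  simp [triangleDetPoly, triangleDet, coords]

theorem stmt7_general (ℓ : ℕ) (hℓ : 3 < ℓ) (a b : ℝ) :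
    ∃ Sig : Set (Fin ℓ → ℝ × ℝ),
      (∃ S : Finset (MvPolynomial (Fin ℓ × Fin 2) ℝ),
        Sig = {p | ∀ f ∈ S, MvPolynomial.eval (coords ℓ p) f = 0}) ∧
      Sig ≠ Set.univ ∧
      {p | ∃ q : ℝ × ℝ, IsSingular ℓ a b p q} ⊆ Sig := by
  let i₁ : Fin ℓ := ⟨1, by omega⟩
  let i₂ : Fin ℓ := ⟨2, by omega⟩
  let i₃ : Fin ℓ := ⟨3, by omega⟩
  refine ⟨{p | triangleDet (p i₁) (p i₂) (p i₃) = 0}, ⟨{triangleDetPoly i₁ i₂ i₃}, ?_⟩, ?_, ?_⟩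
  · ext p
    simp [eval_triangleDetPoly]
  · intro huniv
    let p₀ : Fin ℓ → ℝ × ℝ := fun i => if i = i₂ then (1, 0) else if i = i₃ then (0, 1) else 0
    have h₀ : p₀ ∈ {p | triangleDet (p i₁) (p i₂) (p i₃) = 0} := huniv ▸ Set.mem_univ p₀
    simp [p₀, i₁, i₂, i₃, triangleDet] at h₀
  · rintro p ⟨q, hq⟩
    exact hq.triangleDet_eq_zero (by simp [i₁]) (by simp [i₂]) (by simp [i₃])

/-- for ℓ > 3, the set of central points p for which F_p has a singular point
is contained in a proper algebraic subset of (ℝ²)^ℓ. -/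
theorem stmt7 (ℓ : ℕ) (hℓ : 3 < ℓ) (a b : ℝ) (ha : 0 < a) (hab : a < b) :
    ∃ Sig : Set (Fin ℓ → ℝ × ℝ),
      (∃ S : Finset (MvPolynomial (Fin ℓ × Fin 2) ℝ),
        Sig = {p | ∀ f ∈ S, MvPolynomial.eval (coords ℓ p) f = 0}) ∧
      Sig ≠ Set.univ ∧
      {p | ∃ q : ℝ × ℝ, IsSingular ℓ a b p q} ⊆ Sig :=
  stmt7_general ℓ hℓ a b
end

section
/- Let ℓ > 3 and 0 < a < b. The set of p = (p₁,…,p_ℓ) ∈ (ℝ²)^ℓ such that p₂, p₃, p₄ are collinear is a proper algebraic subset of (ℝ²)^ℓ, and for any p outside this set, the mapping F_p : ℝ² → ℝ^ℓ has no singular point q with q ∉ {p₁,…,p_ℓ}. -/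
/-!
At a singular point `q` the two columns of the Jacobian are dependent, so some nonzero
`(c, d)` is orthogonal to every row. The rows `i ≥ 1` are `q - p i`, hence every `p i` with
`i ≥ 1` lies on the line `c x₁ + d x₂ = c q₁ + d q₂`. So the paper's `p₂, p₃, p₄` (indices
`1, 2, 3` here) are collinear whether or not `q` is a centre: outside `Sig` there is no
singular point at all. Collinearity of three points of the plane is the vanishing of a `2 × 2`
determinant, which gives the polynomial equation of `Sig`.
-/

theorem Matrix.exists_mulVec_eq_zero_of_rank_lt {K m n : Type*} [Field K] [Fintype n]
    [DecidableEq n] (M : Matrix m n K) (h : M.rank < Fintype.card n) :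
    ∃ v ≠ 0, M.mulVec v = 0 := by
  have hker : 0 < Module.finrank K (LinearMap.ker M.mulVecLin) := by
    have := LinearMap.finrank_range_add_finrank_ker M.mulVecLin
    rw [Module.finrank_fintype_fun_eq_card] at this
    rw [Matrix.rank] at h
    omega
  obtain ⟨⟨v, hv⟩, hv0⟩ := Module.finrank_pos_iff_exists_ne_zero.mp hker
  exact ⟨v, by simpa using hv0, hv⟩

theorem collinear_setOf_linear_eq {c d : ℝ} (hcd : (c, d) ≠ 0) (e : ℝ) :
    Collinear ℝ {x : ℝ × ℝ | c * x.1 + d * x.2 = e} := by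
  have hn : c ^ 2 + d ^ 2 ≠ 0 := by
    contrapose! hcd
    simp only [Prod.mk_eq_zero]
    constructor <;> nlinarith [sq_nonneg c, sq_nonneg d]
  refine collinear_iff_exists_forall_eq_smul_vadd _ |>.mpr
    ⟨(c * e / (c ^ 2 + d ^ 2), d * e / (c ^ 2 + d ^ 2)), (-d, c), fun x hx => ?_⟩
  refine ⟨(c * x.2 - d * x.1) / (c ^ 2 + d ^ 2), ?_⟩
  rw [Set.mem_ofPred_eq] at hx
  subst hx
  ext <;> simp <;> field_simp <;> ring

theorem collinear_iff_det_eq_zero (A B C : ℝ × ℝ) :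
    Collinear ℝ ({A, B, C} : Set (ℝ × ℝ)) ↔
      (B.1 - A.1) * (C.2 - A.2) - (C.1 - A.1) * (B.2 - A.2) = 0 := by
  constructor
  · rw [collinear_iff_of_mem (Set.mem_insert A _)]
    rintro ⟨v, hv⟩
    obtain ⟨s, rfl⟩ := hv B (by simp)
    obtain ⟨t, rfl⟩ := hv C (by simp)
    simp only [vadd_eq_add, Prod.fst_add, Prod.snd_add, Prod.smul_fst, Prod.smul_snd,
      smul_eq_mul, add_sub_cancel_right]
    ring
  · intro hdet
    by_cases hAB : A = B
    · rw [hAB, Set.insert_eq_of_mem (Set.mem_insert B _)]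
      exact collinear_pair ℝ B C
    · have hline : (B.2 - A.2, A.1 - B.1) ≠ 0 := by
        contrapose! hAB
        simp only [Prod.mk_eq_zero, sub_eq_zero] at hAB
        exact Prod.ext hAB.2 hAB.1.symm
      refine (collinear_setOf_linear_eq hline ((B.2 - A.2) * A.1 + (A.1 - B.1) * A.2)).subset ?_
      rintro x (rfl | rfl | rfl) <;> simp only [Set.mem_ofPred_eq]
      · ring
      · linear_combination -hdet

open MvPolynomial in
noncomputable def collinearityPoly {ℓ : ℕ} (i j k : Fin ℓ) : MvPolynomial (Fin ℓ × Fin 2) ℝ :=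
  (X (j, 0) - X (i, 0)) * (X (k, 1) - X (i, 1)) - (X (k, 0) - X (i, 0)) * (X (j, 1) - X (i, 1))

theorem eval_collinearityPoly_eq_zero_iff {ℓ : ℕ} (p : Fin ℓ → ℝ × ℝ) (i j k : Fin ℓ) :
    MvPolynomial.eval (coords ℓ p) (collinearityPoly i j k) = 0 ↔
      Collinear ℝ ({p i, p j, p k} : Set (ℝ × ℝ)) := by
  simp [collinearityPoly, coords, collinear_iff_det_eq_zero]

theorem collinear_of_isSingular {ℓ : ℕ} {a b : ℝ} {p : Fin ℓ → ℝ × ℝ} {q : ℝ × ℝ}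
    (hq : IsSingular ℓ a b p q) : Collinear ℝ (p '' {i | i.val ≠ 0}) := by
  obtain ⟨v, hv0, hv⟩ :=
    (Jmat ℓ a b p q).exists_mulVec_eq_zero_of_rank_lt (by simpa [IsSingular] using hq)
  have hline : (v 0, v 1) ≠ 0 := by
    contrapose! hv0
    simp only [Prod.mk_eq_zero] at hv0
    ext j
    fin_cases j <;> simp [hv0]
  refine (collinear_setOf_linear_eq hline (v 0 * q.1 + v 1 * q.2)).subset ?_
  rintro _ ⟨i, hi, rfl⟩
  have hrow := congrFun hv i
  simp only [Set.mem_ofPred_eq] at hi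
  simp only [Matrix.mulVec, dotProduct, Fin.sum_univ_two, Jmat, hi, if_false, Matrix.cons_val_zero,
    Matrix.cons_val_one, Pi.zero_apply] at hrow
  rw [Set.mem_ofPred_eq]
  linear_combination -hrow

/-- for ℓ > 3, the set of p with p₂, p₃, p₄ collinear is a proper algebraic
subset, and for p outside it F_p has no singular point away from the centers p₁,…,p_ℓ. -/
theorem stmt10 (ℓ : ℕ) (hℓ : 3 < ℓ) (a b : ℝ)
    (Sig : Set (Fin ℓ → ℝ × ℝ))
    (hSig : Sig = {p | Collinear ℝ
      ({p ⟨1, by omega⟩, p ⟨2, by omega⟩, p ⟨3, by omega⟩} : Set (ℝ × ℝ))}) :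
    (∃ S : Finset (MvPolynomial (Fin ℓ × Fin 2) ℝ),
      Sig = {p | ∀ f ∈ S, MvPolynomial.eval (coords ℓ p) f = 0}) ∧
    Sig ≠ Set.univ ∧
    ∀ p ∉ Sig, ∀ q : ℝ × ℝ, IsSingular ℓ a b p q → ∃ i : Fin ℓ, q = p i := by
  refine ⟨⟨{collinearityPoly ⟨1, by omega⟩ ⟨2, by omega⟩ ⟨3, by omega⟩}, ?_⟩, ?_, ?_⟩
  · ext p
    simp [hSig, eval_collinearityPoly_eq_zero_iff]
  · intro h
    have hstd := h ▸ Set.mem_univ (fun i : Fin ℓ => if i.val = 2 then ((1 : ℝ), (0 : ℝ))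
      else if i.val = 3 then (0, 1) else 0)
    simp [hSig, collinear_iff_det_eq_zero] at hstd
  · intro p hp q hq
    refine absurd ((collinear_of_isSingular hq).subset ?_) (hSig ▸ hp)
    rintro _ (rfl | rfl | rfl) <;> exact Set.mem_image_of_mem p (by simp)
end
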